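/- Let D be an n×n matrix over ℤ/2 with D·D = 0, let V be an upper-triangular n×n matrix over ℤ/2 with all diagonal entries equal to 1, and suppose R = D·V is reduced. If j is an index with nonzero column R_j and i = low(R, j), then the i-th column of R is zero. (The lowest-one positions of a reduced boundary matrix define a partial matching: a cell that kills a class is never itself a creator of a lowest one.) -/

import Mathlib

/-- The `j`-th column of the matrix `R`. -/
def column {n : ℕ} (R : Matrix (Fin n) (Fin n) (ZMod 2)) (j : Fin n) : Fin n → ZMod 2 :=
  fun i => R i j

/-- `low v` is the largest index at which the vector `v` over `ℤ/2` is nonzero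
(`⊥` if `v = 0`). -/
def low {n : ℕ} (v : Fin n → ZMod 2) : WithBot (Fin n) :=
  (Finset.univ.filter (fun i => v i ≠ 0)).max

/-- `lowM R j` is the lowest-one position of the `j`-th column of `R`. -/
def lowM {n : ℕ} (R : Matrix (Fin n) (Fin n) (ZMod 2)) (j : Fin n) : WithBot (Fin n) :=
  low (column R j)

/-- A matrix over `ℤ/2` is reduced if its nonzero columns have pairwise distinct
lowest-one positions. -/
def ReducedMat {n : ℕ} (R : Matrix (Fin n) (Fin n) (ZMod 2)) : Prop :=
  ∀ j k : Fin n, j ≠ k → column R j ≠ 0 → column R k ≠ 0 → lowM R j ≠ lowM R k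

/-- A matrix is upper-triangular with all diagonal entries equal to `1`. -/
def IsUpperUnitriangular {n : ℕ} (V : Matrix (Fin n) (Fin n) (ZMod 2)) : Prop :=
  (∀ i j : Fin n, j < i → V i j = 0) ∧ ∀ i : Fin n, V i i = 1

/-!
`R = D V` with `V` invertible gives `R (V⁻¹ R) = D D V = 0`, so the `j`-th column `w` of `V⁻¹ R`
is a relation among the columns of `R`. As `V⁻¹` is upper unitriangular, `w i = R i j ≠ 0`.
But the nonzero columns of a reduced matrix are linearly independent (in a nontrivial relation,
the column with the largest `low` is the only one contributing to that row), so column `i` is zero.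
-/

open Matrix

lemma coe_le_low {n : ℕ} {v : Fin n → ZMod 2} {m : Fin n} (h : v m ≠ 0) :
    (m : WithBot (Fin n)) ≤ low v :=
  Finset.le_max (Finset.mem_filter.mpr ⟨Finset.mem_univ _, h⟩)

lemma apply_ne_zero_of_low_eq {n : ℕ} {v : Fin n → ZMod 2} {i : Fin n} (h : low v = i) :
    v i ≠ 0 :=
  (Finset.mem_filter.mp (Finset.mem_of_max h)).2

lemma apply_eq_zero_of_low_lt {n : ℕ} {v : Fin n → ZMod 2} {i m : Fin n} (h : low v = i)
    (him : i < m) : v m = 0 := by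
  by_contra hm
  have := coe_le_low hm
  rw [h, WithBot.coe_le_coe] at this
  exact this.not_gt him

lemma exists_low_eq_coe {n : ℕ} {v : Fin n → ZMod 2} (h : v ≠ 0) : ∃ i : Fin n, low v = i := by
  obtain ⟨m, hm⟩ := Function.ne_iff.mp h
  exact Finset.max_of_mem (Finset.mem_filter.mpr ⟨Finset.mem_univ m, hm⟩)

lemma column_mul {n : ℕ} (A B : Matrix (Fin n) (Fin n) (ZMod 2)) (j : Fin n) :
    column (A * B) j = A *ᵥ column B j :=
  rfl

lemma ReducedMat.column_eq_zero_of_mulVec_eq_zero {n : ℕ} {R : Matrix (Fin n) (Fin n) (ZMod 2)}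
    (hR : ReducedMat R) {w : Fin n → ZMod 2} (hw : R *ᵥ w = 0) {k : Fin n} (hk : w k ≠ 0) :
    column R k = 0 := by
  by_contra hRk
  set S := Finset.univ.filter fun l => w l ≠ 0 ∧ column R l ≠ 0
  obtain ⟨k₀, hk₀S, hk₀max⟩ := Finset.exists_max_image S (lowM R) ⟨k, by simp [S, hk, hRk]⟩
  obtain ⟨hwk₀, hRk₀⟩ := (Finset.mem_filter.mp hk₀S).2
  obtain ⟨ℓ, hℓ⟩ := exists_low_eq_coe hRk₀
  have hterm : ∀ k, k ≠ k₀ → R ℓ k * w k = 0 := by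
    intro k hkk₀
    by_contra hne
    obtain ⟨hRℓk, hwk⟩ := mul_ne_zero_iff.mp hne
    have hcol : column R k ≠ 0 := Function.ne_iff.mpr ⟨ℓ, hRℓk⟩
    have hkS : k ∈ S := Finset.mem_filter.mpr ⟨Finset.mem_univ _, hwk, hcol⟩
    have hlow : lowM R k = lowM R k₀ :=
      le_antisymm (hk₀max k hkS) (by rw [lowM, hℓ]; exact coe_le_low (v := column R k) hRℓk)
    exact hR k k₀ hkk₀ hcol hRk₀ hlow
  have hrow : (R *ᵥ w) ℓ = R ℓ k₀ * w k₀ :=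
    Finset.sum_eq_single k₀ (fun k _ => hterm k) (absurd (Finset.mem_univ _))
  have : R ℓ k₀ * w k₀ ≠ 0 := mul_ne_zero (apply_ne_zero_of_low_eq (v := column R k₀) hℓ) hwk₀
  exact this (hrow ▸ congrFun hw ℓ)

lemma Matrix.IsUpperTriangular.apply_ne_zero_of_det_ne_zero {ι R : Type*} [Fintype ι]
    [LinearOrder ι] [DecidableEq ι] [CommRing R] {M : Matrix ι ι R} (hM : M.IsUpperTriangular)
    (hdet : M.det ≠ 0) (i : ι) : M i i ≠ 0 := by
  rw [det_of_isUpperTriangular hM] at hdet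
  exact fun h => hdet (Finset.prod_eq_zero (Finset.mem_univ i) h)

lemma Matrix.IsUpperTriangular.mulVec_apply_of_forall_lt {ι R : Type*} [Fintype ι]
    [LinearOrder ι] [NonUnitalNonAssocSemiring R] {M : Matrix ι ι R} (hM : M.IsUpperTriangular)
    {v : ι → R} {i : ι} (hv : ∀ m, i < m → v m = 0) : (M *ᵥ v) i = M i i * v i := by
  refine Finset.sum_eq_single i (fun m _ hmi => ?_) (absurd (Finset.mem_univ _))
  rcases hmi.lt_or_gt with hlt | hgt
  · exact mul_eq_zero_of_left (hM hlt) _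
  · exact mul_eq_zero_of_right _ (hv m hgt)

theorem column_of_low_is_zero_general {n : ℕ} (D V : Matrix (Fin n) (Fin n) (ZMod 2))
    (hDD : D * D = 0) (hV : IsUpperUnitriangular V) (hR : ReducedMat (D * V))
    (j : Fin n) (i : Fin n)
    (hi : lowM (D * V) j = (i : WithBot (Fin n))) :
    column (D * V) i = 0 := by
  have hVtri : V.IsUpperTriangular := fun a b hab => hV.1 a b hab
  have hdet : IsUnit V.det := by
    rw [det_of_isUpperTriangular hVtri]
    simp [hV.2]
  have := V.invertibleOfIsUnitDet hdet
  have hWtri : V⁻¹.IsUpperTriangular := blockTriangular_inv_of_blockTriangular hVtri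
  have hrel : D * V * (V⁻¹ * (D * V)) = 0 := by
    rw [← Matrix.mul_assoc, mul_nonsing_inv_cancel_right _ _ hdet, ← Matrix.mul_assoc, hDD,
      Matrix.zero_mul]
  refine hR.column_eq_zero_of_mulVec_eq_zero (w := column (V⁻¹ * (D * V)) j) ?_ ?_
  · rw [← column_mul, hrel]
    rfl
  · rw [column_mul, hWtri.mulVec_apply_of_forall_lt fun m => apply_eq_zero_of_low_lt hi]
    exact mul_ne_zero (hWtri.apply_ne_zero_of_det_ne_zero (V.isUnit_nonsing_inv_det hdet).ne_zero i)
      (apply_ne_zero_of_low_eq hi)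

/-- In a reduced form `R = D·V` of a boundary matrix `D` (with `D·D = 0`), the row
index of a lowest one is never itself the index of a nonzero column: if `i = low(R, j)`
for some nonzero column `j`, then column `i` of `R` is zero. -/
theorem column_of_low_is_zero {n : ℕ} (D V : Matrix (Fin n) (Fin n) (ZMod 2))
    (hDD : D * D = 0) (hV : IsUpperUnitriangular V) (hR : ReducedMat (D * V))
    (j : Fin n) (hj : column (D * V) j ≠ 0) (i : Fin n)
    (hi : lowM (D * V) j = (i : WithBot (Fin n))) :
    column (D * V) i = 0 :=
  column_of_low_is_zero_general D V hDD hV hR j i hi
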